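/- Let E be a closed subset of ∂T with cap^T(E) > 0. Then lim_{n→∞} cap^T_n(E) = +∞. -/

import Mathlib

open scoped ENNReal NNReal
open Filter Topology

noncomputable section

/-- The vertex set of the dyadic tree `T`: finite binary strings. The boundary `∂T`
is the set of infinite binary sequences `ℕ → Bool`. `pre ζ k` is the prefix of
length `k` of the boundary point `ζ`. -/
def pre (ζ : ℕ → Bool) (k : ℕ) : List Bool := List.ofFn (fun i : Fin k => ζ i)

/-- The tree condenser capacity `cap^T_n(E)`: the infimum of `Σ_x φ(x)²` over
`φ : T → [0,∞)` with `Iφ(ζ) = Σ_{x ∈ P(ζ)} φ(x) ≥ 1` on `E` and `φ(x) = 0`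
whenever `d(x) ≤ n-1`.  For `n = 0` this is the tree capacity `cap^T(E)`. -/
noncomputable def treeCapN (n : ℕ) (E : Set (ℕ → Bool)) : ℝ≥0∞ :=
  sInf { c | ∃ φ : List Bool → ℝ≥0,
    (∀ ζ ∈ E, 1 ≤ ∑' k : ℕ, (φ (pre ζ k) : ℝ≥0∞)) ∧
    (∀ x : List Bool, x.length < n → φ x = 0) ∧
    c = ∑' x : List Bool, (φ x : ℝ≥0∞) ^ 2 }

/-- The tree capacity `cap^T(E)` of a set `E ⊆ ∂T`. -/
noncomputable def treeCap (E : Set (ℕ → Bool)) : ℝ≥0∞ := treeCapN 0 E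

/-!
If all `cap^T_n(E)` were bounded by `C`, then for each level `n` a near-optimal admissible `φ`
vanishing below level `n` collects, by compactness of `E`, at least `1/2` of its potential before
some finite level `M`; doubled and cut off at `M` it becomes an admissible function supported in
the band of levels `[n, M)` with energy at most `4(C + 1)`. Iterating `n ↦ M` gives admissible
functions with disjoint supports, and the average of `N` of them has energy at most `4(C + 1)/N`
by orthogonality, forcing `cap^T(E) = 0`.
-/

open Function Set

theorem Finset.sum_sq_eq_sum_sq_of_mul_eq_zero {ι R : Type*} [CommSemiring R] (s : Finset ι)
    (f : ι → R) (h : ∀ i ∈ s, ∀ j ∈ s, i ≠ j → f i * f j = 0) :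
    (∑ i ∈ s, f i) ^ 2 = ∑ i ∈ s, f i ^ 2 := by
  rw [sq, Finset.sum_mul_sum]
  refine Finset.sum_congr rfl fun i hi => ?_
  rw [Finset.sum_eq_single_of_mem i hi fun j hj hji => h i hi j hj hji.symm, sq]

@[simp]
theorem pre_length (ζ : ℕ → Bool) (k : ℕ) : (pre ζ k).length = k := by
  simp [pre]

theorem continuous_comp_pre {X : Type*} [TopologicalSpace X] (f : List Bool → X) (k : ℕ) :
    Continuous fun ζ => f (pre ζ k) :=
  (continuous_of_discreteTopology (f := fun v : Fin k → Bool => f (List.ofFn v))).comp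
    (continuous_pi fun i => continuous_apply (i : ℕ))

namespace DyadicTree

/-- `Iφ(ζ)`. -/
def potential (φ : List Bool → ℝ≥0) (ζ : ℕ → Bool) : ℝ≥0∞ := ∑' k, (φ (pre ζ k) : ℝ≥0∞)

def energy (φ : List Bool → ℝ≥0) : ℝ≥0∞ := ∑' x, (φ x : ℝ≥0∞) ^ 2

def truncate (M : ℕ) (φ : List Bool → ℝ≥0) (x : List Bool) : ℝ≥0 :=
  if x.length < M then φ x else 0

theorem potential_const_mul (c : ℝ≥0) (φ : List Bool → ℝ≥0) (ζ : ℕ → Bool) :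
    potential (fun x => c * φ x) ζ = c * potential φ ζ := by
  simp only [potential, ENNReal.coe_mul, ENNReal.tsum_mul_left]

theorem energy_const_mul (c : ℝ≥0) (φ : List Bool → ℝ≥0) :
    energy (fun x => c * φ x) = (c : ℝ≥0∞) ^ 2 * energy φ := by
  simp only [energy, ENNReal.coe_mul, mul_pow, ENNReal.tsum_mul_left]

theorem potential_sum {ι : Type*} (s : Finset ι) (ψ : ι → List Bool → ℝ≥0) (ζ : ℕ → Bool) :
    potential (fun x => ∑ j ∈ s, ψ j x) ζ = ∑ j ∈ s, potential (ψ j) ζ := by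
  simp only [potential, ENNReal.ofNNReal_finsetSum]
  exact Summable.tsum_finsetSum fun _ _ => ENNReal.summable

theorem energy_sum_of_pairwise_disjoint {ι : Type*} (s : Finset ι) (ψ : ι → List Bool → ℝ≥0)
    (hψ : Pairwise (Disjoint on fun j => support (ψ j))) :
    energy (fun x => ∑ j ∈ s, ψ j x) = ∑ j ∈ s, energy (ψ j) := by
  have hsq : ∀ x, ((∑ j ∈ s, ψ j x : ℝ≥0) : ℝ≥0∞) ^ 2 = ∑ j ∈ s, (ψ j x : ℝ≥0∞) ^ 2 := by
    intro x
    rw [ENNReal.ofNNReal_finsetSum]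
    refine Finset.sum_sq_eq_sum_sq_of_mul_eq_zero s _ fun i _ j _ hij => ?_
    by_cases hi : ψ i x = 0
    · simp [hi]
    · simp [notMem_support.1 (disjoint_left.1 (hψ hij) hi)]
  simp only [energy, hsq]
  exact Summable.tsum_finsetSum fun _ _ => ENNReal.summable

theorem potential_truncate (M : ℕ) (φ : List Bool → ℝ≥0) (ζ : ℕ → Bool) :
    potential (truncate M φ) ζ = ∑ k ∈ Finset.range M, (φ (pre ζ k) : ℝ≥0∞) := by
  rw [potential, tsum_eq_sum (s := Finset.range M) fun k hk => ?_]
  · refine Finset.sum_congr rfl fun k hk => ?_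
    rw [truncate, if_pos (by simpa using hk)]
  · rw [truncate, if_neg (by simpa using hk), ENNReal.coe_zero]

theorem energy_truncate_le (M : ℕ) (φ : List Bool → ℝ≥0) : energy (truncate M φ) ≤ energy φ := by
  refine ENNReal.tsum_le_tsum fun x => ?_
  unfold truncate
  split_ifs <;> simp

theorem support_truncate_subset (M : ℕ) (φ : List Bool → ℝ≥0) :
    support (truncate M φ) ⊆ support φ ∩ {x | x.length < M} := by
  intro x hx
  by_cases h : x.length < M
  · exact ⟨by simpa [truncate, h] using hx, h⟩
  · simp [truncate, h] at hx

theorem exists_le_sum_range_of_lt_potential {E : Set (ℕ → Bool)} (hE : IsCompact E)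
    {φ : List Bool → ℝ≥0} {a : ℝ≥0∞} (ha : ∀ ζ ∈ E, a < potential φ ζ) :
    ∃ M, ∀ ζ ∈ E, a ≤ ∑ k ∈ Finset.range M, (φ (pre ζ k) : ℝ≥0∞) := by
  set S : ℕ → (ℕ → Bool) → ℝ≥0∞ := fun M ζ => ∑ k ∈ Finset.range M, (φ (pre ζ k) : ℝ≥0∞)
  have hS_open : ∀ M, IsOpen (S M ⁻¹' Ioi a) := fun M =>
    isOpen_Ioi.preimage (continuous_finsetSum _ fun k _ =>
      continuous_comp_pre (fun x => (φ x : ℝ≥0∞)) k)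
  have hS_mono : Monotone fun M => S M ⁻¹' Ioi a := fun M M' hMM' ζ (hζ : a < S M ζ) =>
    show a < S M' ζ from hζ.trans_le (Finset.sum_le_sum_of_subset (Finset.range_mono hMM'))
  have hcover : E ⊆ ⋃ M, S M ⁻¹' Ioi a := fun ζ hζ => by
    have := ha ζ hζ
    rw [potential, ENNReal.tsum_eq_iSup_nat, lt_iSup_iff] at this
    exact mem_iUnion.2 this
  obtain ⟨M, hM⟩ := hE.elim_directed_cover _ hS_open hcover hS_mono.directed_le
  exact ⟨M, fun ζ hζ => (hM hζ).le⟩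

end DyadicTree

open DyadicTree

theorem treeCapN_mono (E : Set (ℕ → Bool)) : Monotone fun n => treeCapN n E :=
  fun _ _ hmn => sInf_le_sInf fun _ ⟨φ, hadm, hzero, hc⟩ =>
    ⟨φ, hadm, fun x hx => hzero x (hx.trans_le hmn), hc⟩

theorem treeCapN_le_energy {n : ℕ} {E : Set (ℕ → Bool)} {φ : List Bool → ℝ≥0}
    (hadm : ∀ ζ ∈ E, 1 ≤ potential φ ζ) (hzero : ∀ x : List Bool, x.length < n → φ x = 0) :
    treeCapN n E ≤ energy φ :=
  sInf_le ⟨φ, hadm, hzero, rfl⟩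

theorem exists_energy_lt_of_treeCapN_lt {n : ℕ} {E : Set (ℕ → Bool)} {c : ℝ≥0∞}
    (h : treeCapN n E < c) : ∃ φ : List Bool → ℝ≥0, (∀ ζ ∈ E, 1 ≤ potential φ ζ) ∧
      (∀ x : List Bool, x.length < n → φ x = 0) ∧ energy φ < c := by
  obtain ⟨_, ⟨φ, hadm, hzero, rfl⟩, hlt⟩ := sInf_lt_iff.1 h
  exact ⟨φ, hadm, hzero, hlt⟩

/-- The witness is the average of `ψ 0, …, ψ (N - 1)`; disjointness makes their energies add. -/
theorem treeCap_le_div_of_pairwise_disjoint {E : Set (ℕ → Bool)} {ψ : ℕ → List Bool → ℝ≥0}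
    {K : ℝ≥0∞} (hadm : ∀ j, ∀ ζ ∈ E, 1 ≤ potential (ψ j) ζ) (hen : ∀ j, energy (ψ j) ≤ K)
    (hψ : Pairwise (Disjoint on fun j => support (ψ j))) {N : ℕ} (hN : N ≠ 0) :
    treeCap E ≤ K / N := by
  have hN' : (N : ℝ≥0) ≠ 0 := Nat.cast_ne_zero.2 hN
  have hinv : (((N : ℝ≥0)⁻¹ : ℝ≥0) : ℝ≥0∞) = (N : ℝ≥0∞)⁻¹ := by
    rw [ENNReal.coe_inv hN', ENNReal.coe_natCast]
  set φ : List Bool → ℝ≥0 := fun x => (N : ℝ≥0)⁻¹ * ∑ j ∈ Finset.range N, ψ j x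
  have hφ_adm : ∀ ζ ∈ E, 1 ≤ potential φ ζ := fun ζ hζ => calc
    (1 : ℝ≥0∞) = (N : ℝ≥0∞)⁻¹ * ∑ _j ∈ Finset.range N, 1 := by
        simp [ENNReal.inv_mul_cancel (Nat.cast_ne_zero.2 hN) (ENNReal.natCast_ne_top N)]
    _ ≤ (N : ℝ≥0∞)⁻¹ * ∑ j ∈ Finset.range N, potential (ψ j) ζ := by
        gcongr with j; exact hadm j ζ hζ
    _ = potential φ ζ := by rw [potential_const_mul, potential_sum, hinv]
  calc treeCap E ≤ energy φ := treeCapN_le_energy hφ_adm fun _ h => absurd h (Nat.not_lt_zero _)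
    _ = (N : ℝ≥0∞)⁻¹ ^ 2 * ∑ j ∈ Finset.range N, energy (ψ j) := by
        rw [energy_const_mul, energy_sum_of_pairwise_disjoint _ _ hψ, hinv]
    _ ≤ (N : ℝ≥0∞)⁻¹ ^ 2 * (N * K) := by
        gcongr
        simpa using Finset.sum_le_sum fun j (_ : j ∈ Finset.range N) => hen j
    _ = K / N := by
        rw [sq, mul_assoc, ← mul_assoc _ (N : ℝ≥0∞),
          ENNReal.inv_mul_cancel (Nat.cast_ne_zero.2 hN) (ENNReal.natCast_ne_top N), one_mul,
          div_eq_mul_inv, mul_comm]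

/-- The witness is a near-optimal function for `treeCapN n E`, doubled and truncated at a level by
which its partial sums exceed `1/2` on `E`. -/
theorem exists_admissible_support_subset_Ico {n : ℕ} {E : Set (ℕ → Bool)} (hE : IsCompact E)
    {c : ℝ≥0∞} (hc : treeCapN n E < c) :
    ∃ M, n ≤ M ∧ ∃ ψ : List Bool → ℝ≥0, (∀ ζ ∈ E, 1 ≤ potential ψ ζ) ∧ energy ψ ≤ 4 * c ∧
      support ψ ⊆ List.length ⁻¹' Ico n M := by
  obtain ⟨φ, hadm, hzero, hen⟩ := exists_energy_lt_of_treeCapN_lt hc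
  obtain ⟨M, hM⟩ := exists_le_sum_range_of_lt_potential hE fun ζ hζ =>
    ENNReal.inv_lt_one.2 ENNReal.one_lt_two |>.trans_le (hadm ζ hζ)
  refine ⟨max n M, le_max_left n M, truncate (max n M) fun x => 2 * φ x, fun ζ hζ => ?_, ?_, ?_⟩
  · calc (1 : ℝ≥0∞) = 2 * 2⁻¹ := (ENNReal.mul_inv_cancel two_ne_zero ENNReal.ofNat_ne_top).symm
      _ ≤ 2 * ∑ k ∈ Finset.range M, (φ (pre ζ k) : ℝ≥0∞) := by gcongr; exact hM ζ hζ
      _ ≤ 2 * ∑ k ∈ Finset.range (max n M), (φ (pre ζ k) : ℝ≥0∞) := by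
        gcongr; exact le_max_right n M
      _ = potential (truncate (max n M) fun x => 2 * φ x) ζ := by
        rw [potential_truncate, Finset.mul_sum]; push_cast; rfl
  · calc energy (truncate (max n M) fun x => 2 * φ x) ≤ energy fun x => 2 * φ x :=
          energy_truncate_le _ _
      _ = 4 * energy φ := by rw [energy_const_mul]; norm_num
      _ ≤ 4 * c := by gcongr
  · intro x hx
    obtain ⟨hφ, hlt⟩ := support_truncate_subset _ _ hx
    exact ⟨not_lt.1 fun h => hφ (by simp [hzero x h]), hlt⟩

theorem eq_zero_of_forall_le_div_natCast {a K : ℝ≥0∞} (hK : K ≠ ⊤)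
    (h : ∀ N : ℕ, N ≠ 0 → a ≤ K / N) : a = 0 := by
  have : Tendsto (fun N : ℕ => K / N) atTop (𝓝 0) := by
    simpa [div_eq_mul_inv] using
      ENNReal.Tendsto.const_mul ENNReal.tendsto_inv_nat_nhds_zero (Or.inr hK)
  exact nonpos_iff_eq_zero.1 <|
    ge_of_tendsto this (eventually_atTop.2 ⟨1, fun N hN => h N (Nat.one_le_iff_ne_zero.1 hN)⟩)

theorem tree_condenser_capacity_blows_up
    (E : Set (ℕ → Bool)) (hE : IsClosed E) (hpos : 0 < treeCap E) :
    Filter.Tendsto (fun n : ℕ => treeCapN n E) Filter.atTop (𝓝 ⊤) := by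
  suffices hsup : ⨆ n, treeCapN n E = ⊤ from hsup ▸ tendsto_atTop_iSup (treeCapN_mono E)
  by_contra hC
  choose M hnM ψ hadm hen hsupp using fun n => exists_admissible_support_subset_Ico hE.isCompact
    ((le_iSup (fun n => treeCapN n E) n).trans_lt (ENNReal.lt_add_right hC one_ne_zero))
  set level : ℕ → ℕ := fun j => M^[j] 0
  have hlevel_succ : ∀ j, level (j + 1) = M (level j) := fun j => iterate_succ_apply' M j 0
  have hlevel : Monotone level :=
    monotone_nat_of_le_succ fun j => (hlevel_succ j).symm ▸ hnM (level j)
  have hdisj : Pairwise (Disjoint on fun j => support (ψ (level j))) :=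
    hlevel.pairwise_disjoint_on_Ico_succ.mono fun i j h => by
      simp only [onFun, Order.succ_eq_add_one, hlevel_succ] at h
      exact (h.preimage List.length).mono (hsupp _) (hsupp _)
  exact hpos.ne' (eq_zero_of_forall_le_div_natCast (by finiteness) fun N hN =>
    treeCap_le_div_of_pairwise_disjoint (fun j => hadm (level j)) (fun j => hen (level j))
      hdisj hN)
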